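/- For every integer n ≥ 1: (i) ∑_{j=1}^{n} H_{j,1}^2/(j+1) = (1/3)H_{n,1}^3 − ∑_{j=1}^{n} H_{j,1}/j^2 + (2/3)H_{n,3} + H_{n,1}^2/(n+1); and (ii) for every integer m ≥ 2, ∑_{j=1}^{n} H_{j,1}^2/(j+m) = ∑_{j=1}^{n} H_{j,1}^2/(j+m−1) + (2/(m−1)) ∑_{j=1}^{n} H_{j,1}/(j+m−1) − H_{n+1,1}^2/(m−1) + 1/(m(m−1)^2) − H_{m,1}/(m−1)^2 + (1/(m−1)^2) ∑_{j=n+2}^{n+m} 1/j + H_{n+1,1}^2/(n+m) + 2H_{n+1,1}/((m−1)(n+m)). -/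

import Mathlib

open Finset Filter Real Topology

/-- Generalized harmonic number `H (n, m) = ∑_{i=1}^{n} 1/i^m` as a real number. -/
noncomputable def H (n m : ℕ) : ℝ := ∑ i ∈ Finset.Icc 1 n, (1 : ℝ) / (i : ℝ) ^ m

/-- Apéry's constant `ζ(3) = ∑_{k=1}^{∞} 1/k³`. -/
noncomputable def zeta3 : ℝ := ∑' k : ℕ, 1 / ((k : ℝ) + 1) ^ 3

/-! Writing the tail `∑_{j=n+2}^{n+m} 1/j` as `H (n + m) 1 - H (n + 1) 1`, both identities involve
only harmonic numbers, and `H (n + 1) k = H n k + 1/(n+1)^k` turns the step `n → n + 1` of an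
induction on `n` into an identity between rational functions. -/

lemma H_zero (m : ℕ) : H 0 m = 0 := by simp [H]

lemma H_succ (n m : ℕ) : H (n + 1) m = H n m + 1 / ((n : ℝ) + 1) ^ m := by
  rw [H, sum_Icc_succ_top (by omega), ← H]
  push_cast
  rfl

lemma H_sub_H {a b : ℕ} (hab : a ≤ b) (k : ℕ) :
    H b k - H a k = ∑ j ∈ Icc (a + 1) b, (1 : ℝ) / (j : ℝ) ^ k := by
  rw [sub_eq_iff_eq_add', H, H, ← zero_add 1, Icc_add_one_left_eq_Ioc, Icc_add_one_left_eq_Ioc,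
    zero_add, Icc_add_one_left_eq_Ioc, sum_Ioc_consecutive _ a.zero_le hab]

lemma sum_H1_sq_div_add_one (n : ℕ) :
    ∑ j ∈ Icc 1 n, H j 1 ^ 2 / ((j : ℝ) + 1) =
      1 / 3 * H n 1 ^ 3 - ∑ j ∈ Icc 1 n, H j 1 / (j : ℝ) ^ 2
        + 2 / 3 * H n 3 + H n 1 ^ 2 / ((n : ℝ) + 1) := by
  induction n with
  | zero => simp [H_zero]
  | succ n ih =>
    rw [sum_Icc_succ_top (by omega), sum_Icc_succ_top (by omega), ih, H_succ n 1, H_succ n 3]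
    push_cast
    field_simp
    ring

lemma sum_H1_sq_div_add {m : ℕ} (hm : 2 ≤ m) (n : ℕ) :
    ∑ j ∈ Icc 1 n, H j 1 ^ 2 / ((j : ℝ) + m) =
      ∑ j ∈ Icc 1 n, H j 1 ^ 2 / ((j : ℝ) + m - 1)
        + 2 / ((m : ℝ) - 1) * ∑ j ∈ Icc 1 n, H j 1 / ((j : ℝ) + m - 1)
        - H (n + 1) 1 ^ 2 / ((m : ℝ) - 1)
        + 1 / ((m : ℝ) * ((m : ℝ) - 1) ^ 2)
        - H m 1 / ((m : ℝ) - 1) ^ 2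
        + 1 / ((m : ℝ) - 1) ^ 2 * (H (n + m) 1 - H (n + 1) 1)
        + H (n + 1) 1 ^ 2 / ((n : ℝ) + m)
        + 2 * H (n + 1) 1 / (((m : ℝ) - 1) * ((n : ℝ) + m)) := by
  have hm' : (2 : ℝ) ≤ m := by exact_mod_cast hm
  have hc : (m : ℝ) - 1 ≠ 0 := by linarith
  induction n with
  | zero =>
    simp only [Icc_eq_empty_of_lt zero_lt_one, sum_empty, zero_add, H_succ, H_zero, Nat.cast_zero]
    field_simp
    ring
  | succ n ih =>
    rw [sum_Icc_succ_top (by omega), sum_Icc_succ_top (by omega), sum_Icc_succ_top (by omega), ih,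
      show n + 1 + m = n + m + 1 by omega, H_succ (n + m), H_succ (n + 1)]
    push_cast
    rw [show (n : ℝ) + 1 + m - 1 = n + m by ring, show (n : ℝ) + m + 1 = n + 1 + m by ring]
    field_simp
    ring

theorem sum_H1_sq_div_shift :
    (∀ n : ℕ, 1 ≤ n →
      ∑ j ∈ Finset.Icc 1 n, (H j 1) ^ 2 / ((j : ℝ) + 1) =
        (1 / 3) * (H n 1) ^ 3 - (∑ j ∈ Finset.Icc 1 n, H j 1 / (j : ℝ) ^ 2)
          + (2 / 3) * H n 3 + (H n 1) ^ 2 / ((n : ℝ) + 1)) ∧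
    (∀ n : ℕ, 1 ≤ n → ∀ m : ℕ, 2 ≤ m →
      ∑ j ∈ Finset.Icc 1 n, (H j 1) ^ 2 / ((j : ℝ) + m) =
        (∑ j ∈ Finset.Icc 1 n, (H j 1) ^ 2 / ((j : ℝ) + m - 1))
          + (2 / ((m : ℝ) - 1)) * ∑ j ∈ Finset.Icc 1 n, H j 1 / ((j : ℝ) + m - 1)
          - (H (n + 1) 1) ^ 2 / ((m : ℝ) - 1)
          + 1 / ((m : ℝ) * ((m : ℝ) - 1) ^ 2)
          - H m 1 / ((m : ℝ) - 1) ^ 2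
          + (1 / ((m : ℝ) - 1) ^ 2) * ∑ j ∈ Finset.Icc (n + 2) (n + m), (1 : ℝ) / (j : ℝ)
          + (H (n + 1) 1) ^ 2 / ((n : ℝ) + m)
          + 2 * H (n + 1) 1 / (((m : ℝ) - 1) * ((n : ℝ) + m))) := by
  refine ⟨fun n _ => sum_H1_sq_div_add_one n, fun n _ m hm => ?_⟩
  have tail : ∑ j ∈ Icc (n + 2) (n + m), (1 : ℝ) / j = H (n + m) 1 - H (n + 1) 1 := by
    simpa only [pow_one] using (H_sub_H (by omega : n + 1 ≤ n + m) 1).symm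
  rw [tail]
  exact sum_H1_sq_div_add hm n
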